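/- arXiv:2503.08255 — 3 statements merged into one kernel-verified Lean document; each statement's English description precedes it below -/
import Mathlib

section
/- For any unit vector α ∈ ℝ³ and any θ ∈ ℝ with cos θ ≠ −1, the matrix E at the Rodrigues matrix satisfies E(R(α,θ))·E(R(α,θ))ᵀ = I − ((1 − cos θ)/2)·ααᵀ; in particular, E(R(α,θ))·E(R(α,θ))ᵀ·α = ((1 + cos θ)/2)·α, and E(R(α,θ))·E(R(α,θ))ᵀ·v = v for every v ∈ ℝ³ orthogonal to α (so the eigenvalues of E·Eᵀ are 1, 1, and (1 + cos θ)/2). -/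
open Matrix

noncomputable section

/-- The cross (hat) map: `x^×` with `x^× y = x × y`. -/
def cross3 (x : Fin 3 → ℝ) : Matrix (Fin 3) (Fin 3) ℝ :=
  !![0, -x 2, x 1; x 2, 0, -x 0; -x 1, x 0, 0]

/-- The vee map: `A∨ = (A₃₂, A₁₃, A₂₁)`. -/
def vee3 (A : Matrix (Fin 3) (Fin 3) ℝ) : Fin 3 → ℝ :=
  ![A 2 1, A 0 2, A 1 0]

/-- The Rodrigues matrix `R(α,θ) = I + sin θ · α^× + (1-cos θ) · α^×α^×`. -/
def rod (α : Fin 3 → ℝ) (θ : ℝ) : Matrix (Fin 3) (Fin 3) ℝ :=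
  1 + Real.sin θ • cross3 α + (1 - Real.cos θ) • (cross3 α * cross3 α)

/-- The error vector `ψ(R) = ½(R - Rᵀ)∨`. -/
def psi3 (R : Matrix (Fin 3) (Fin 3) ℝ) : Fin 3 → ℝ :=
  (1 / 2 : ℝ) • vee3 (R - Rᵀ)

/-- The generalized error vector `e_R(R) = (1/√(1+tr R)) (R - Rᵀ)∨`. -/
def eR (R : Matrix (Fin 3) (Fin 3) ℝ) : Fin 3 → ℝ :=
  (1 / Real.sqrt (1 + R.trace)) • vee3 (R - Rᵀ)

/-- `E_c(R) = ½((tr R)·I - Rᵀ)`. -/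
def Ec (R : Matrix (Fin 3) (Fin 3) ℝ) : Matrix (Fin 3) (Fin 3) ℝ :=
  (1 / 2 : ℝ) • (R.trace • (1 : Matrix (Fin 3) (Fin 3) ℝ) - Rᵀ)

/-- `E(R) = (1/√(1+tr R))(2E_c(R) + ½ e_R e_Rᵀ)`. -/
def Emat (R : Matrix (Fin 3) (Fin 3) ℝ) : Matrix (Fin 3) (Fin 3) ℝ :=
  (1 / Real.sqrt (1 + R.trace)) •
    ((2 : ℝ) • Ec R + (1 / 2 : ℝ) • vecMulVec (eR R) (eR R))

/-!
Write `K = α^×`. For a unit vector `α`, `K² = ααᵀ - I` and `Kᵀ = -K`, so `R - Rᵀ = 2 sin θ · K` and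
`tr R = 1 + 2 cos θ`. In `2E_c + ½ e_R e_Rᵀ` the `ααᵀ`-terms cancel because
`sin² θ = (1 - cos θ)(1 + cos θ)`, leaving `E = ((1 + cos θ) I + sin θ · K) / √(2 + 2 cos θ)`. Then
`E Eᵀ = ((1 + cos θ)² I - sin² θ · K²) / (2 + 2 cos θ) = I - ((1 - cos θ)/2) ααᵀ`, and `ααᵀ` acts as
the orthogonal projection onto `α`.
-/

open Real

lemma dotProduct_self_fin_three (x : Fin 3 → ℝ) : x ⬝ᵥ x = x 0 ^ 2 + x 1 ^ 2 + x 2 ^ 2 := by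
  simp [dotProduct, Fin.sum_univ_three, sq]

section Cross

variable (x : Fin 3 → ℝ)

lemma cross3_transpose : (cross3 x)ᵀ = -cross3 x := by
  ext i j; fin_cases i <;> fin_cases j <;> simp [cross3]

lemma trace_cross3 : (cross3 x).trace = 0 := by
  simp [cross3, Matrix.trace, Fin.sum_univ_three]

lemma vee3_cross3 : vee3 (cross3 x) = x := by
  ext i; fin_cases i <;> simp [cross3, vee3]

lemma cross3_mul_cross3 : cross3 x * cross3 x = vecMulVec x x - (x ⬝ᵥ x) • 1 := by
  ext i j; fin_cases i <;> fin_cases j <;>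
    simp [cross3, vecMulVec, Matrix.mul_apply, Fin.sum_univ_three, dotProduct] <;> ring

lemma vee3_smul (c : ℝ) (A : Matrix (Fin 3) (Fin 3) ℝ) : vee3 (c • A) = c • vee3 A := by
  ext i; fin_cases i <;> simp [vee3]

variable {x}

lemma smul_one_add_cross3_mul_transpose (hx : x ⬝ᵥ x = 1) {c s : ℝ} (hcs : s ^ 2 + c ^ 2 = 1) :
    ((1 + c) • (1 : Matrix (Fin 3) (Fin 3) ℝ) + s • cross3 x) *
      ((1 + c) • (1 : Matrix (Fin 3) (Fin 3) ℝ) + s • cross3 x)ᵀ =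
    (2 + 2 * c) • (1 - ((1 - c) / 2) • vecMulVec x x) := by
  rw [transpose_add, transpose_smul, transpose_smul, transpose_one, cross3_transpose]
  simp only [add_mul, mul_add, smul_mul_smul_comm, Matrix.one_mul, Matrix.mul_one, mul_neg,
    smul_neg, cross3_mul_cross3, hx]
  linear_combination (norm := module) hcs • (1 - vecMulVec x x)

end Cross

section Projection

variable {R n : Type*} [CommRing R] [Fintype n] [DecidableEq n] {x : n → R} (k : R)

lemma one_sub_smul_vecMulVec_mulVec_self (hx : x ⬝ᵥ x = 1) :
    (1 - k • vecMulVec x x) *ᵥ x = (1 - k) • x := by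
  rw [sub_mulVec, one_mulVec, smul_mulVec, vecMulVec_mulVec, hx, MulOpposite.op_one, one_smul,
    sub_smul, one_smul]

lemma one_sub_smul_vecMulVec_mulVec_of_orthogonal {v : n → R} (hv : x ⬝ᵥ v = 0) :
    (1 - k • vecMulVec x x) *ᵥ v = v := by
  rw [sub_mulVec, one_mulVec, smul_mulVec, vecMulVec_mulVec, hv]
  simp

end Projection

lemma one_add_cos_pos {θ : ℝ} (hθ : cos θ ≠ -1) : 0 < 1 + cos θ := by
  linarith [hθ.symm.lt_of_le (neg_one_le_cos θ)]

section Rodrigues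

variable (α : Fin 3 → ℝ) (θ : ℝ)

lemma rod_transpose :
    (rod α θ)ᵀ = 1 - sin θ • cross3 α + (1 - cos θ) • (cross3 α * cross3 α) := by
  simp only [rod, transpose_add, transpose_smul, transpose_one, transpose_mul, cross3_transpose,
    neg_mul_neg]
  module

lemma vee3_rod_sub_transpose : vee3 (rod α θ - (rod α θ)ᵀ) = (2 * sin θ) • α := by
  have : rod α θ - (rod α θ)ᵀ = (2 * sin θ) • cross3 α := by
    rw [rod_transpose, rod]; module
  rw [this, vee3_smul, vee3_cross3]

variable {α}

lemma rod_of_dotProduct_self_eq_one (hα : α ⬝ᵥ α = 1) :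
    rod α θ = cos θ • 1 + sin θ • cross3 α + (1 - cos θ) • vecMulVec α α := by
  rw [rod, cross3_mul_cross3, hα]
  module

lemma trace_rod (hα : α ⬝ᵥ α = 1) : (rod α θ).trace = 1 + 2 * cos θ := by
  rw [rod_of_dotProduct_self_eq_one θ hα]
  simp [trace_cross3, hα]
  ring

lemma two_smul_Ec_rod (hα : α ⬝ᵥ α = 1) : (2 : ℝ) • Ec (rod α θ) =
    (1 + cos θ) • 1 + sin θ • cross3 α - (1 - cos θ) • vecMulVec α α := by
  rw [Ec, trace_rod θ hα, rod_of_dotProduct_self_eq_one θ hα]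
  simp only [transpose_add, transpose_smul, transpose_one, cross3_transpose, transpose_vecMulVec]
  module

lemma eR_rod (hα : α ⬝ᵥ α = 1) : eR (rod α θ) = (2 * sin θ / √(2 + 2 * cos θ)) • α := by
  rw [eR, trace_rod θ hα, vee3_rod_sub_transpose, smul_smul]
  congr 1
  ring_nf

lemma Emat_rod (hα : α ⬝ᵥ α = 1) (hθ : cos θ ≠ -1) :
    Emat (rod α θ) = (√(2 + 2 * cos θ))⁻¹ • ((1 + cos θ) • 1 + sin θ • cross3 α) := by
  have hpos : 0 < 2 + 2 * cos θ := by linarith [one_add_cos_pos hθ]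
  have hcoef : 1 / 2 * (2 * sin θ / √(2 + 2 * cos θ)) * (2 * sin θ / √(2 + 2 * cos θ)) =
      1 - cos θ := by
    have : 1 + cos θ ≠ 0 := (one_add_cos_pos hθ).ne'
    rw [mul_assoc, ← sq, div_pow, sq_sqrt hpos.le, mul_pow, sin_sq]
    field_simp
    ring
  rw [Emat, trace_rod θ hα, two_smul_Ec_rod θ hα, eR_rod θ hα, smul_vecMulVec, vecMulVec_smul,
    smul_smul, smul_smul, hcoef]
  congr 1
  · ring_nf
  · module

end Rodrigues

/-- `E·Eᵀ = I - ((1-cos θ)/2)·ααᵀ` at the Rodrigues matrix, with the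
eigenvector consequences along `α` and orthogonal to `α`. -/
theorem Emat_mul_transpose_rodrigues (α : Fin 3 → ℝ)
    (hα : α 0 ^ 2 + α 1 ^ 2 + α 2 ^ 2 = 1) (θ : ℝ) (hθ : Real.cos θ ≠ -1) :
    Emat (rod α θ) * (Emat (rod α θ))ᵀ =
        (1 : Matrix (Fin 3) (Fin 3) ℝ) - ((1 - Real.cos θ) / 2) • vecMulVec α α ∧
      (Emat (rod α θ) * (Emat (rod α θ))ᵀ) *ᵥ α = ((1 + Real.cos θ) / 2) • α ∧
      ∀ v : Fin 3 → ℝ, α ⬝ᵥ v = 0 → (Emat (rod α θ) * (Emat (rod α θ))ᵀ) *ᵥ v = v := by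
  have hunit : α ⬝ᵥ α = 1 := by rwa [dotProduct_self_fin_three]
  have hpos : 0 < 2 + 2 * cos θ := by linarith [one_add_cos_pos hθ]
  have hEE : Emat (rod α θ) * (Emat (rod α θ))ᵀ = 1 - ((1 - cos θ) / 2) • vecMulVec α α := by
    rw [Emat_rod θ hunit hθ, transpose_smul, smul_mul_smul_comm,
      smul_one_add_cross3_mul_transpose hunit (sin_sq_add_cos_sq θ), smul_smul, ← sq, inv_pow,
      sq_sqrt hpos.le, inv_mul_cancel₀ hpos.ne', one_smul]
  refine ⟨hEE, ?_, fun v hv => ?_⟩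
  · rw [hEE, one_sub_smul_vecMulVec_mulVec_self _ hunit]
    congr 1
    ring
  · rw [hEE, one_sub_smul_vecMulVec_mulVec_of_orthogonal _ hv]
end
end

section
/- For every R ∈ SO(3) with tr R ≠ −1, the matrix (1/√(1 + tr R))·(2·E_c(R)ᵀ + e_R(R)·e_R(R)ᵀ) is a two-sided inverse of E(R), i.e., E(R)·[(1/√(1 + tr R))·(2·E_c(R)ᵀ + e_R(R)·e_R(R)ᵀ)] = I and [(1/√(1 + tr R))·(2·E_c(R)ᵀ + e_R(R)·e_R(R)ᵀ)]·E(R) = I. -/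
open Matrix

noncomputable section

set_option maxHeartbeats 1000000
lemma cross3_sq (x : Fin 3 → ℝ) :
    cross3 x * cross3 x = vecMulVec x x - (x ⬝ᵥ x) • 1 := by
  ext i j
  fin_cases i <;> fin_cases j <;>
    simp [cross3, vecMulVec_apply, dotProduct, Fin.sum_univ_three, Matrix.mul_apply,
      Matrix.one_apply] <;> ring

lemma cross3_vee3 (R : Matrix (Fin 3) (Fin 3) ℝ) :
    cross3 (vee3 (R - Rᵀ)) = R - Rᵀ := by
  ext i j
  fin_cases i <;> fin_cases j <;>
    simp [cross3, vee3, Matrix.sub_apply, Matrix.transpose_apply] <;> ring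

/-- rotation-matrix form of the two-sided inverse of `E(R)` on SO(3). -/
theorem Emat_inverse_SO3 (R : Matrix (Fin 3) (Fin 3) ℝ)
    (hR1 : Rᵀ * R = 1) (hR2 : R * Rᵀ = 1) (hR3 : R.det = 1)
    (htr : R.trace ≠ -1) :
    Emat R * ((1 / Real.sqrt (1 + R.trace)) •
        ((2 : ℝ) • (Ec R)ᵀ + vecMulVec (eR R) (eR R))) = 1 ∧
      ((1 / Real.sqrt (1 + R.trace)) •
        ((2 : ℝ) • (Ec R)ᵀ + vecMulVec (eR R) (eR R))) * Emat R = 1 := by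
  -- Cayley–Hamilton for SO(3): R² = tR - t + Rᵀ
  have hCH : R * R = R.trace • R - R.trace • 1 + Rᵀ := by
    have hadj : R.adjugate = Rᵀ := by
      have h1 : Rᵀ * (R * R.adjugate) = Rᵀ := by
        rw [Matrix.mul_adjugate, hR3, one_smul, mul_one]
      rwa [← mul_assoc, hR1, one_mul] at h1
    rw [Matrix.adjugate_fin_three] at hadj
    have hc := fun i j => congrFun (congrFun hadj i) j
    have h00 := hc 0 0; have h01 := hc 0 1; have h02 := hc 0 2
    have h10 := hc 1 0; have h11 := hc 1 1; have h12 := hc 1 2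
    have h20 := hc 2 0; have h21 := hc 2 1; have h22 := hc 2 2
    simp only [Matrix.cons_val', Matrix.cons_val_zero, Matrix.cons_val_one, Matrix.head_cons,
      Matrix.empty_val', Matrix.cons_val_fin_one, Matrix.head_fin_const, Matrix.cons_val_two,
      Matrix.tail_cons, Matrix.transpose_apply, Matrix.of_apply]
        at h00 h01 h02 h10 h11 h12 h20 h21 h22
    ext i j
    fin_cases i <;> fin_cases j <;>
      simp [Matrix.mul_apply, Fin.sum_univ_three, Matrix.trace_fin_three, Matrix.one_apply] <;>
      linarith [h00, h01, h02, h10, h11, h12, h20, h21, h22]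
  have hCHT : Rᵀ * Rᵀ = R.trace • Rᵀ - R.trace • 1 + R := by
    have h := congrArg Matrix.transpose hCH
    simpa [Matrix.transpose_mul, Matrix.transpose_smul, Matrix.transpose_one,
      Matrix.transpose_add, Matrix.transpose_sub, Matrix.transpose_transpose] using h
  set u : Fin 3 → ℝ := vee3 (R - Rᵀ) with hu_def
  -- value of |u|²
  have huu : u ⬝ᵥ u = 3 + 2 * R.trace - R.trace ^ 2 := by
    have e00 := congrFun (congrFun hCH 0) 0
    have e11 := congrFun (congrFun hCH 1) 1
    have e22 := congrFun (congrFun hCH 2) 2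
    have n0 := congrFun (congrFun hR1 0) 0
    have n1 := congrFun (congrFun hR1 1) 1
    have n2 := congrFun (congrFun hR1 2) 2
    simp [Matrix.mul_apply, Fin.sum_univ_three, Matrix.trace_fin_three, Matrix.one_apply,
      Matrix.add_apply, Matrix.sub_apply, Matrix.smul_apply, Matrix.transpose_apply,
      smul_eq_mul] at e00 e11 e22 n0 n1 n2
    simp only [hu_def, dotProduct, Fin.sum_univ_three, vee3, Matrix.sub_apply,
      Matrix.transpose_apply, Matrix.cons_val_zero, Matrix.cons_val_one, Matrix.head_cons,
      Matrix.cons_val_two, Matrix.tail_cons, Matrix.trace_fin_three]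
    nlinarith [e00, e11, e22, n0, n1, n2]
  have hnn : (0:ℝ) ≤ u ⬝ᵥ u := by
    simp only [dotProduct, Fin.sum_univ_three]
    have := mul_self_nonneg (u 0); have := mul_self_nonneg (u 1); have := mul_self_nonneg (u 2)
    linarith
  have h1t : 0 < 1 + R.trace := by
    have h0 : 0 ≤ 1 + R.trace := by nlinarith [hnn, huu]
    rcases h0.lt_or_eq with h | h
    · exact h
    · exact absurd (by linarith) htr
  have h1t' : (1 + R.trace) ≠ 0 := ne_of_gt h1t
  set s : ℝ := Real.sqrt (1 + R.trace) with hs_def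
  have hs0 : s ≠ 0 := ne_of_gt (Real.sqrt_pos.2 h1t)
  have hs2 : s * s = 1 + R.trace := Real.mul_self_sqrt h1t.le
  -- uuᵀ in terms of R
  have hK2 : (R - Rᵀ) * (R - Rᵀ) = R * R + Rᵀ * Rᵀ - 1 - 1 := by
    rw [sub_mul, mul_sub, mul_sub, hR1, hR2]; abel
  have hUU : vecMulVec u u = (R - Rᵀ) * (R - Rᵀ) + (u ⬝ᵥ u) • 1 := by
    have h := cross3_sq u
    rw [hu_def, cross3_vee3, ← hu_def] at h
    rw [h]; abel
  have hU : vecMulVec u u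
      = (1 + R.trace) • (R + Rᵀ) + ((1 + R.trace) * (1 - R.trace)) • (1 : Matrix (Fin 3) (Fin 3) ℝ) := by
    rw [hUU, hK2, hCH, hCHT, huu]
    match_scalars <;> ring
  -- the two simplified factors
  have hv : vecMulVec (eR R) (eR R) = ((1 + R.trace)⁻¹) • vecMulVec u u := by
    have : (1/s) * (1/s) = (1 + R.trace)⁻¹ := by
      rw [div_mul_div_comm, one_mul, hs2, one_div]
    ext i j
    simp only [eR, vecMulVec_apply, Pi.smul_apply, smul_eq_mul, Matrix.smul_apply,
      ← hs_def, ← hu_def]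
    calc (1/s * u i) * (1/s * u j) = (1/s * (1/s)) * (u i * u j) := by ring
    _ = (1 + R.trace)⁻¹ * (u i * u j) := by rw [this]
  have hB : (2 : ℝ) • (Ec R)ᵀ + vecMulVec (eR R) (eR R) = 1 + Rᵀ := by
    rw [hv, hU, Ec]
    rw [Matrix.transpose_smul, Matrix.transpose_sub, Matrix.transpose_smul,
      Matrix.transpose_one, Matrix.transpose_transpose]
    match_scalars <;> field_simp <;> ring
  have hA : (2 : ℝ) • Ec R + (1/2 : ℝ) • vecMulVec (eR R) (eR R)
      = (1/2 : ℝ) • ((1 + R.trace) • (1 : Matrix (Fin 3) (Fin 3) ℝ) + (R - Rᵀ)) := by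
    rw [hv, hU, Ec]
    match_scalars <;> field_simp <;> ring
  have P1 : ((1 + R.trace) • (1 : Matrix (Fin 3) (Fin 3) ℝ) + (R - Rᵀ)) * (1 + Rᵀ)
      = (2 * (1 + R.trace)) • 1 := by
    rw [mul_add, mul_one, add_mul, Matrix.smul_mul, one_mul, sub_mul, hR2, hCHT]
    module
  have P2 : (1 + Rᵀ) * ((1 + R.trace) • (1 : Matrix (Fin 3) (Fin 3) ℝ) + (R - Rᵀ))
      = (2 * (1 + R.trace)) • 1 := by
    rw [add_mul, one_mul, mul_add, Matrix.mul_smul, mul_one, mul_sub, hR1, hCHT]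
    module
  constructor
  · rw [Emat, hA, ← hs_def, Matrix.smul_mul, Matrix.mul_smul, Matrix.smul_mul, hB, P1]
    rw [smul_smul, smul_smul, smul_smul]
    rw [show (1/s * (1/s) * (1/2) * (2 * (1 + R.trace)) : ℝ) = (1 + R.trace) / (s * s) by ring,
      hs2, div_self h1t', one_smul]
  · rw [Emat, hA, ← hs_def, Matrix.smul_mul, Matrix.mul_smul, Matrix.mul_smul, hB, P2]
    rw [smul_smul, smul_smul, smul_smul]
    rw [show (1/s * (1/s) * (1/2) * (2 * (1 + R.trace)) : ℝ) = (1 + R.trace) / (s * s) by ring,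
      hs2, div_self h1t', one_smul]
end
end

section
/- (Proposition 1) Let R̃ : ℝ → ℝ^{3×3} be a curve, t ∈ ℝ, and let ω_m, β, β̂, u, w ∈ ℝ³ with β̃ := β − β̂. Suppose R̃(t) ∈ SO(3) with tr[R̃(t)] ≠ −1, and that R̃ has derivative D := R̃(t)·ω_m^× − ω_m^×·R̃(t) − R̃(t)·β^× + β̂^×·R̃(t) + R̃(t)·u^× − w^×·R̃(t) at t (in the sense of HasDerivAt). Then the curve s ↦ e_R(R̃(s)) has derivative at t equal to e_R(R̃(t))^×·(ω_m − β̂) + E(R̃(t))·(u − β̃) − E(R̃(t))ᵀ·w. -/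
open Matrix

noncomputable section

attribute [local instance] Matrix.normedAddCommGroup Matrix.normedSpace

/-! Write the derivative as `Ṙ = R a^× - b^× R` with `a = ωm - β + u`, `b = ωm - βh + w`.
For every `3 × 3` matrix `R` one has `(R a^× + a^× Rᵀ)∨ = (tr R • I - Rᵀ) a`,
`(b^× R + Rᵀ b^×)∨ = (tr R • I - R) b` and `tr (R a^×) = -(R - Rᵀ)∨ ⬝ a`; inserted into the
quotient rule for `(R - Rᵀ)∨ / √(1 + tr R)` they give `E(R) a - E(R)ᵀ b`, and
`E(R) - E(R)ᵀ = e_R^×` regroups this into the stated form. The quotient rule needs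
`1 + tr R > 0`, which holds on `SO(3)` away from `tr R = -1` because there
`(1 + tr R)(3 - tr R) = |(R - Rᵀ)∨|²` (the diagonal cofactors of `R` are its diagonal entries)
and `tr R ≤ 3`. -/

theorem cross3_add (x y : Fin 3 → ℝ) : cross3 (x + y) = cross3 x + cross3 y := by
  ext i j; fin_cases i <;> fin_cases j <;> simp [cross3] <;> ring

theorem cross3_sub (x y : Fin 3 → ℝ) : cross3 (x - y) = cross3 x - cross3 y := by
  ext i j; fin_cases i <;> fin_cases j <;> simp [cross3] <;> ring

theorem vee3_sub (A B : Matrix (Fin 3) (Fin 3) ℝ) : vee3 (A - B) = vee3 A - vee3 B := by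
  ext i; fin_cases i <;> rfl

theorem cross3_smul (c : ℝ) (x : Fin 3 → ℝ) : cross3 (c • x) = c • cross3 x := by
  ext i j; fin_cases i <;> fin_cases j <;> simp [cross3]

theorem cross3_vee3_sub_transpose (A : Matrix (Fin 3) (Fin 3) ℝ) :
    cross3 (vee3 (A - Aᵀ)) = A - Aᵀ := by
  ext i j; fin_cases i <;> fin_cases j <;> simp [cross3, vee3]

theorem vee3_mul_cross3_sub_transpose (R : Matrix (Fin 3) (Fin 3) ℝ) (a : Fin 3 → ℝ) :
    vee3 (R * cross3 a - (R * cross3 a)ᵀ) = (R.trace • 1 - Rᵀ) *ᵥ a := by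
  ext i; fin_cases i <;>
    simp [cross3, vee3, mulVec, dotProduct, Fin.sum_univ_three, mul_apply, trace_fin_three,
      one_apply] <;> ring

theorem vee3_cross3_mul_sub_transpose (R : Matrix (Fin 3) (Fin 3) ℝ) (b : Fin 3 → ℝ) :
    vee3 (cross3 b * R - (cross3 b * R)ᵀ) = (R.trace • 1 - R) *ᵥ b := by
  ext i; fin_cases i <;>
    simp [cross3, vee3, mulVec, vecMul, dotProduct, Fin.sum_univ_three, trace_fin_three,
      one_apply] <;> ring

theorem trace_mul_cross3 (R : Matrix (Fin 3) (Fin 3) ℝ) (a : Fin 3 → ℝ) :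
    (R * cross3 a).trace = -(vee3 (R - Rᵀ) ⬝ᵥ a) := by
  simp [cross3, vee3, dotProduct, Fin.sum_univ_three, mul_apply, trace_fin_three]; ring

theorem trace_cross3_mul (R : Matrix (Fin 3) (Fin 3) ℝ) (b : Fin 3 → ℝ) :
    (cross3 b * R).trace = -(vee3 (R - Rᵀ) ⬝ᵥ b) := by
  rw [trace_mul_comm, trace_mul_cross3]

theorem HasDerivAt.matrix_apply {m n : Type*} [Fintype n] {M : ℝ → Matrix m n ℝ}
    {M' : Matrix m n ℝ} {t : ℝ} (h : HasDerivAt M M' t) (i : m) (j : n) :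
    HasDerivAt (fun s => M s i j) (M' i j) t :=
  hasDerivAt_pi.1 (hasDerivAt_pi.1 h i) j

theorem HasDerivAt.matrix_transpose {m n : Type*} [Fintype m] [Fintype n]
    {M : ℝ → Matrix m n ℝ} {M' : Matrix m n ℝ} {t : ℝ} (h : HasDerivAt M M' t) :
    HasDerivAt (fun s => (M s)ᵀ) M'ᵀ t :=
  hasDerivAt_pi.2 fun j => hasDerivAt_pi.2 fun i => h.matrix_apply i j

theorem HasDerivAt.matrix_trace {n : Type*} [Fintype n] {M : ℝ → Matrix n n ℝ}
    {M' : Matrix n n ℝ} {t : ℝ} (h : HasDerivAt M M' t) :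
    HasDerivAt (fun s => (M s).trace) M'.trace t :=
  HasDerivAt.fun_sum fun i _ => h.matrix_apply i i

theorem HasDerivAt.vee3 {A : ℝ → Matrix (Fin 3) (Fin 3) ℝ} {A' : Matrix (Fin 3) (Fin 3) ℝ}
    {t : ℝ} (h : HasDerivAt A A' t) : HasDerivAt (fun s => vee3 (A s)) (vee3 A') t := by
  refine hasDerivAt_pi.2 fun i => ?_
  fin_cases i <;> exact h.matrix_apply _ _

theorem diag_le_one_of_transpose_mul_self_eq_one {n : Type*} [Fintype n] [DecidableEq n]
    {R : Matrix n n ℝ} (h : Rᵀ * R = 1) (i : n) : R i i ≤ 1 := by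
  have hcol : ∑ k, R k i ^ 2 = 1 := by
    simpa [mul_apply, sq] using congrFun (congrFun h i) i
  have : R i i ^ 2 ≤ ∑ k, R k i ^ 2 :=
    Finset.single_le_sum (fun k _ => sq_nonneg (R k i)) (Finset.mem_univ i)
  nlinarith

theorem trace_le_card_of_transpose_mul_self_eq_one {n : Type*} [Fintype n] [DecidableEq n]
    {R : Matrix n n ℝ} (h : Rᵀ * R = 1) : R.trace ≤ Fintype.card n := by
  simpa [trace] using Finset.sum_le_sum fun i (_ : i ∈ Finset.univ) =>
    diag_le_one_of_transpose_mul_self_eq_one h i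

theorem one_add_trace_mul_three_sub_trace {R : Matrix (Fin 3) (Fin 3) ℝ} (h : Rᵀ * R = 1)
    (hdet : R.det = 1) :
    (1 + R.trace) * (3 - R.trace) = vee3 (R - Rᵀ) ⬝ᵥ vee3 (R - Rᵀ) := by
  have hadj : adjugate R = Rᵀ := by
    calc adjugate R = Rᵀ * (R * adjugate R) := by rw [← Matrix.mul_assoc, h, one_mul]
      _ = Rᵀ := by rw [mul_adjugate, hdet, one_smul, mul_one]
  have hcof : ∀ i, adjugate R i i = R i i := fun i => by rw [hadj, transpose_apply]
  have hcol : ∀ i, R 0 i * R 0 i + R 1 i * R 1 i + R 2 i * R 2 i = 1 := fun i => by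
    simpa [mul_apply, Fin.sum_univ_three] using congrFun (congrFun h i) i
  have c0 := hcof 0; have c1 := hcof 1; have c2 := hcof 2
  simp only [adjugate_fin_three, of_apply, cons_val', cons_val_zero, cons_val_one,
    cons_val_two, empty_val', cons_val_fin_one, head_cons, tail_cons, head_fin_const] at c0 c1 c2
  simp only [vee3, dotProduct, Fin.sum_univ_three, trace_fin_three, Matrix.sub_apply,
    transpose_apply, cons_val_zero, cons_val_one, cons_val_two, head_cons, tail_cons]
  linear_combination -2 * c0 - 2 * c1 - 2 * c2 - hcol 0 - hcol 1 - hcol 2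

theorem neg_one_le_trace_of_orthogonal_of_det_eq_one {R : Matrix (Fin 3) (Fin 3) ℝ}
    (h : Rᵀ * R = 1) (hdet : R.det = 1) : -1 ≤ R.trace := by
  have hle : R.trace ≤ 3 := by simpa using trace_le_card_of_transpose_mul_self_eq_one h
  have hsq : 0 ≤ vee3 (R - Rᵀ) ⬝ᵥ vee3 (R - Rᵀ) := by
    simpa using dotProduct_self_star_nonneg (vee3 (R - Rᵀ))
  nlinarith [one_add_trace_mul_three_sub_trace h hdet]

theorem two_smul_Ec (R : Matrix (Fin 3) (Fin 3) ℝ) : (2 : ℝ) • Ec R = R.trace • 1 - Rᵀ := by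
  rw [Ec, smul_smul]; norm_num

theorem Emat_eq (R : Matrix (Fin 3) (Fin 3) ℝ) :
    Emat R = (1 / √(1 + R.trace)) •
      (R.trace • 1 - Rᵀ + (1 / 2 : ℝ) • vecMulVec (eR R) (eR R)) := by
  rw [Emat, two_smul_Ec]

theorem transpose_Emat (R : Matrix (Fin 3) (Fin 3) ℝ) :
    (Emat R)ᵀ = (1 / √(1 + R.trace)) •
      (R.trace • 1 - R + (1 / 2 : ℝ) • vecMulVec (eR R) (eR R)) := by
  rw [Emat_eq]; simp

theorem Emat_sub_transpose (R : Matrix (Fin 3) (Fin 3) ℝ) :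
    Emat R - (Emat R)ᵀ = cross3 (eR R) := by
  rw [transpose_Emat, Emat_eq, ← smul_sub, add_sub_add_right_eq_sub, sub_sub_sub_cancel_left,
    ← cross3_vee3_sub_transpose, eR, cross3_smul]

theorem smul_add_vecMulVec_eR_mulVec {R : Matrix (Fin 3) (Fin 3) ℝ} (hpos : 0 < 1 + R.trace)
    (M : Matrix (Fin 3) (Fin 3) ℝ) (x : Fin 3 → ℝ) :
    ((1 / √(1 + R.trace)) • (M + (1 / 2 : ℝ) • vecMulVec (eR R) (eR R))) *ᵥ x =
      (1 / √(1 + R.trace)) • (M *ᵥ x) +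
        ((vee3 (R - Rᵀ) ⬝ᵥ x) / (2 * (1 + R.trace))) • eR R := by
  have hs0 : √(1 + R.trace) ≠ 0 := (Real.sqrt_pos.2 hpos).ne'
  rw [smul_mulVec, add_mulVec, smul_mulVec, vecMulVec_mulVec, op_smul_eq_smul, smul_add,
    smul_smul, smul_smul]
  congr 2
  rw [eR, smul_dotProduct, smul_eq_mul]
  field_simp
  rw [Real.sq_sqrt hpos.le]

def eRDeriv (R D : Matrix (Fin 3) (Fin 3) ℝ) : Fin 3 → ℝ :=
  (1 / √(1 + R.trace)) • vee3 (D - Dᵀ) - (D.trace / (2 * (1 + R.trace))) • eR R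

theorem HasDerivAt.eR {Rt : ℝ → Matrix (Fin 3) (Fin 3) ℝ} {D : Matrix (Fin 3) (Fin 3) ℝ}
    {t : ℝ} (h : HasDerivAt Rt D t) (hpos : 0 < 1 + (Rt t).trace) :
    HasDerivAt (fun s => eR (Rt s)) (eRDeriv (Rt t) D) t := by
  have hs0 : √(1 + (Rt t).trace) ≠ 0 := (Real.sqrt_pos.2 hpos).ne'
  have hsqrt : HasDerivAt (fun s => √(1 + (Rt s).trace))
      (D.trace / (2 * √(1 + (Rt t).trace))) t :=
    (h.matrix_trace.const_add 1).sqrt hpos.ne'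
  have hfun : (fun s => _root_.eR (Rt s)) =
      fun s => (√(1 + (Rt s).trace))⁻¹ • _root_.vee3 (Rt s - (Rt s)ᵀ) := by
    funext s; rw [_root_.eR, one_div]
  rw [hfun]
  refine ((hsqrt.inv hs0).smul (h.sub h.matrix_transpose).vee3).congr_deriv ?_
  have hcoef : -(D.trace / (2 * √(1 + (Rt t).trace))) / √(1 + (Rt t).trace) ^ 2 =
      -(D.trace / (2 * (1 + (Rt t).trace)) * (√(1 + (Rt t).trace))⁻¹) := by
    field_simp
    rw [Real.sq_sqrt hpos.le]
  change (√(1 + (Rt t).trace))⁻¹ • _root_.vee3 (D - Dᵀ) +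
    (-(D.trace / (2 * √(1 + (Rt t).trace))) / √(1 + (Rt t).trace) ^ 2) •
      _root_.vee3 (Rt t - (Rt t)ᵀ) = _
  rw [hcoef, eRDeriv, _root_.eR, smul_smul, one_div, neg_smul, ← sub_eq_add_neg]

theorem eRDeriv_mul_cross3_sub_cross3_mul {R : Matrix (Fin 3) (Fin 3) ℝ}
    (hpos : 0 < 1 + R.trace) (a b : Fin 3 → ℝ) :
    eRDeriv R (R * cross3 a - cross3 b * R) = Emat R *ᵥ a - (Emat R)ᵀ *ᵥ b := by
  have hvee : vee3 ((R * cross3 a - cross3 b * R) - (R * cross3 a - cross3 b * R)ᵀ) =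
      (R.trace • 1 - Rᵀ) *ᵥ a - (R.trace • 1 - R) *ᵥ b := by
    rw [transpose_sub, sub_sub_sub_comm, vee3_sub, vee3_mul_cross3_sub_transpose,
      vee3_cross3_mul_sub_transpose]
  have htr : (R * cross3 a - cross3 b * R).trace =
      -(vee3 (R - Rᵀ) ⬝ᵥ a) + vee3 (R - Rᵀ) ⬝ᵥ b := by
    rw [trace_sub, trace_mul_cross3, trace_cross3_mul]; ring
  rw [eRDeriv, hvee, htr, transpose_Emat, Emat_eq, smul_add_vecMulVec_eR_mulVec hpos,
    smul_add_vecMulVec_eR_mulVec hpos]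
  module

theorem hasDerivAt_eR_error_dynamics_general (Rt : ℝ → Matrix (Fin 3) (Fin 3) ℝ) (t : ℝ)
    (ωm β βh u w : Fin 3 → ℝ)
    (hR1 : (Rt t)ᵀ * Rt t = 1) (hR3 : (Rt t).det = 1)
    (htr : (Rt t).trace ≠ -1)
    (hD : HasDerivAt Rt
      (Rt t * cross3 ωm - cross3 ωm * Rt t - Rt t * cross3 β + cross3 βh * Rt t +
        Rt t * cross3 u - cross3 w * Rt t) t) :
    HasDerivAt (fun s => eR (Rt s))
      (cross3 (eR (Rt t)) *ᵥ (ωm - βh) + Emat (Rt t) *ᵥ (u - (β - βh)) -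
        (Emat (Rt t))ᵀ *ᵥ w) t := by
  have hpos : 0 < 1 + (Rt t).trace := by
    linarith [lt_of_le_of_ne (neg_one_le_trace_of_orthogonal_of_det_eq_one hR1 hR3) htr.symm]
  have hkin : Rt t * cross3 ωm - cross3 ωm * Rt t - Rt t * cross3 β + cross3 βh * Rt t +
      Rt t * cross3 u - cross3 w * Rt t =
      Rt t * cross3 (ωm - β + u) - cross3 (ωm - βh + w) * Rt t := by
    simp only [cross3_add, cross3_sub, Matrix.mul_add, Matrix.mul_sub, Matrix.add_mul,
      Matrix.sub_mul]
    abel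
  rw [hkin] at hD
  refine (hD.eR hpos).congr_deriv ?_
  rw [eRDeriv_mul_cross3_sub_cross3_mul hpos, ← Emat_sub_transpose, sub_mulVec]
  simp only [mulVec_add, mulVec_sub]
  abel

/-- Proposition 1: derivative of the generalized estimation error. -/
theorem hasDerivAt_eR_error_dynamics (Rt : ℝ → Matrix (Fin 3) (Fin 3) ℝ) (t : ℝ)
    (ωm β βh u w : Fin 3 → ℝ)
    (hR1 : (Rt t)ᵀ * Rt t = 1) (hR2 : Rt t * (Rt t)ᵀ = 1) (hR3 : (Rt t).det = 1)
    (htr : (Rt t).trace ≠ -1)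
    (hD : HasDerivAt Rt
      (Rt t * cross3 ωm - cross3 ωm * Rt t - Rt t * cross3 β + cross3 βh * Rt t +
        Rt t * cross3 u - cross3 w * Rt t) t) :
    HasDerivAt (fun s => eR (Rt s))
      (cross3 (eR (Rt t)) *ᵥ (ωm - βh) + Emat (Rt t) *ᵥ (u - (β - βh)) -
        (Emat (Rt t))ᵀ *ᵥ w) t :=
  hasDerivAt_eR_error_dynamics_general Rt t ωm β βh u w hR1 hR3 htr hD
end
end
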